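/- Fix a field K and a nonzero q ∈ K with q + 1 ≠ 0 (e.g. K = ℂ(q) with q the variable). Let R be the K-algebra presented by generators T_0, T_1, …, T_{n−1} with relations T_0² = (q−2)·T_0 + (q−1); T_i² = (q−1)·T_i + q for 1 ≤ i ≤ n−1; T_iT_{i+1}T_i = T_{i+1}T_iT_{i+1} for 1 ≤ i ≤ n−2; T_0T_1T_0T_1 = (q−1)(T_1T_0T_1 + T_1T_0) − T_0T_1T_0; T_1T_0T_1T_0 = (q−1)(T_1T_0T_1 + T_0T_1) − T_0T_1T_0; T_iT_j = T_jT_i for |i−j| ≥ 2. Let S be the K-algebra presented by generators e, T_1, …, T_{n−1} with relations T_i² = (q−1)·T_i + q for 1 ≤ i ≤ n−1; T_iT_{i+1}T_i = T_{i+1}T_iT_{i+1} for 1 ≤ i ≤ n−2; T_iT_j = T_jT_i for |i−j| ≥ 2; e² = e; eT_i = T_ie for i ≥ 2; eT_1eT_1 = T_1eT_1e; eT_1eT_1 = T_1eT_1 − eT_1e + T_1e + eT_1 + e − T_1 − 1. Then there is a K-algebra isomorphism R ≅ S sending T_0 ↦ q·e − 1 and T_i ↦ T_i for 1 ≤ i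 ≤ n−1, with inverse sending e ↦ q⁻¹(T_0 + 1). -/

import Mathlib

noncomputable section

/-- The relations of Solomon's presentation of the mirabolic Hecke algebra `R_n(K,q)`,
on generators `T_0, T_1, …, T_{n-1}` (indexed by `Fin n`). -/
inductive SolomonRel (K : Type) [Field K] (q : K) (n : ℕ) :
    FreeAlgebra K (Fin n) → FreeAlgebra K (Fin n) → Prop
  | quad0 (i : Fin n) (hi : i.val = 0) :
      SolomonRel K q n (FreeAlgebra.ι K i * FreeAlgebra.ι K i)
        ((q - 2) • FreeAlgebra.ι K i + (q - 1) • (1 : FreeAlgebra K (Fin n)))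
  | quad (i : Fin n) (hi : 1 ≤ i.val) :
      SolomonRel K q n (FreeAlgebra.ι K i * FreeAlgebra.ι K i)
        ((q - 1) • FreeAlgebra.ι K i + q • (1 : FreeAlgebra K (Fin n)))
  | braid (i j : Fin n) (hi : 1 ≤ i.val) (hij : i.val + 1 = j.val) :
      SolomonRel K q n (FreeAlgebra.ι K i * FreeAlgebra.ι K j * FreeAlgebra.ι K i)
        (FreeAlgebra.ι K j * FreeAlgebra.ι K i * FreeAlgebra.ι K j)
  | rel4 (i j : Fin n) (hi : i.val = 0) (hj : j.val = 1) :
      SolomonRel K q n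
        (FreeAlgebra.ι K i * FreeAlgebra.ι K j * FreeAlgebra.ι K i * FreeAlgebra.ι K j)
        ((q - 1) • (FreeAlgebra.ι K j * FreeAlgebra.ι K i * FreeAlgebra.ι K j +
            FreeAlgebra.ι K j * FreeAlgebra.ι K i) -
          FreeAlgebra.ι K i * FreeAlgebra.ι K j * FreeAlgebra.ι K i)
  | rel5 (i j : Fin n) (hi : i.val = 0) (hj : j.val = 1) :
      SolomonRel K q n
        (FreeAlgebra.ι K j * FreeAlgebra.ι K i * FreeAlgebra.ι K j * FreeAlgebra.ι K i)
        ((q - 1) • (FreeAlgebra.ι K j * FreeAlgebra.ι K i * FreeAlgebra.ι K j +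
            FreeAlgebra.ι K i * FreeAlgebra.ι K j) -
          FreeAlgebra.ι K i * FreeAlgebra.ι K j * FreeAlgebra.ι K i)
  | comm (i j : Fin n) (hij : i.val + 2 ≤ j.val ∨ j.val + 2 ≤ i.val) :
      SolomonRel K q n (FreeAlgebra.ι K i * FreeAlgebra.ι K j)
        (FreeAlgebra.ι K j * FreeAlgebra.ι K i)

/-- The mirabolic Hecke algebra `R_n(K,q)`, presented by Solomon's relations. -/
abbrev MirabolicHecke (K : Type) [Field K] (q : K) (n : ℕ) : Type :=
  RingQuot (SolomonRel K q n)

/-- The generator `T_i` of the mirabolic Hecke algebra. -/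
def MirabolicHecke.T {K : Type} [Field K] {q : K} {n : ℕ} (i : Fin n) :
    MirabolicHecke K q n :=
  RingQuot.mkAlgHom K (SolomonRel K q n) (FreeAlgebra.ι K i)

/-- The relations of the new presentation of the mirabolic Hecke algebra on generators
`e, T_1, …, T_{n-1}`, indexed by `Fin n` with `0 ↦ e` and `i ↦ T_i` for `1 ≤ i ≤ n-1`. -/
inductive MirNewRel (K : Type) [Field K] (q : K) (n : ℕ) :
    FreeAlgebra K (Fin n) → FreeAlgebra K (Fin n) → Prop
  | quad (i : Fin n) (hi : 1 ≤ i.val) :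
      MirNewRel K q n (FreeAlgebra.ι K i * FreeAlgebra.ι K i)
        ((q - 1) • FreeAlgebra.ι K i + q • (1 : FreeAlgebra K (Fin n)))
  | braid (i j : Fin n) (hi : 1 ≤ i.val) (hij : i.val + 1 = j.val) :
      MirNewRel K q n (FreeAlgebra.ι K i * FreeAlgebra.ι K j * FreeAlgebra.ι K i)
        (FreeAlgebra.ι K j * FreeAlgebra.ι K i * FreeAlgebra.ι K j)
  | comm (i j : Fin n) (hi : 1 ≤ i.val) (hj : 1 ≤ j.val)
      (hij : i.val + 2 ≤ j.val ∨ j.val + 2 ≤ i.val) :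
      MirNewRel K q n (FreeAlgebra.ι K i * FreeAlgebra.ι K j)
        (FreeAlgebra.ι K j * FreeAlgebra.ι K i)
  | idem (x : Fin n) (hx : x.val = 0) :
      MirNewRel K q n (FreeAlgebra.ι K x * FreeAlgebra.ι K x) (FreeAlgebra.ι K x)
  | ecomm (x i : Fin n) (hx : x.val = 0) (hi : 2 ≤ i.val) :
      MirNewRel K q n (FreeAlgebra.ι K x * FreeAlgebra.ι K i)
        (FreeAlgebra.ι K i * FreeAlgebra.ι K x)
  | erel6 (x t : Fin n) (hx : x.val = 0) (ht : t.val = 1) :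
      MirNewRel K q n
        (FreeAlgebra.ι K x * FreeAlgebra.ι K t * FreeAlgebra.ι K x * FreeAlgebra.ι K t)
        (FreeAlgebra.ι K t * FreeAlgebra.ι K x * FreeAlgebra.ι K t * FreeAlgebra.ι K x)
  | erel7 (x t : Fin n) (hx : x.val = 0) (ht : t.val = 1) :
      MirNewRel K q n
        (FreeAlgebra.ι K x * FreeAlgebra.ι K t * FreeAlgebra.ι K x * FreeAlgebra.ι K t)
        (FreeAlgebra.ι K t * FreeAlgebra.ι K x * FreeAlgebra.ι K t -
            FreeAlgebra.ι K x * FreeAlgebra.ι K t * FreeAlgebra.ι K x +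
            FreeAlgebra.ι K t * FreeAlgebra.ι K x + FreeAlgebra.ι K x * FreeAlgebra.ι K t +
            FreeAlgebra.ι K x - FreeAlgebra.ι K t - 1)

/-- The algebra with new presentation on generators `e, T_1, …, T_{n-1}`. -/
abbrev MirNew (K : Type) [Field K] (q : K) (n : ℕ) : Type := RingQuot (MirNewRel K q n)

/-- The generators of `MirNew`: `gen 0 = e`, `gen i = T_i` for `i ≥ 1`. -/
def MirNew.gen {K : Type} [Field K] {q : K} {n : ℕ} (i : Fin n) : MirNew K q n :=
  RingQuot.mkAlgHom K (MirNewRel K q n) (FreeAlgebra.ι K i)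

/-!
Since `q ≠ 0`, `T₀ = q • e - 1` and `e = q⁻¹ • (T₀ + 1)` is an invertible affine change of the
first generator, so it suffices to check that each presentation's relations hold for the images
of the generators. Modulo the quadratic relation of `T₁`, the difference of the two sides of each
relation involving `T₀` is `q²` times that of a relation involving `e`: `T₀` is quadratic iff `e`
is idempotent, Solomon's two quartic relations correspond to the expression of `eT₁eT₁` and of
`T₁eT₁e` by the same right-hand side, and `eT₁eT₁ = T₁eT₁e` is the conjunction of the two.
-/

section SubstitutionIdentities

variable {K A : Type*} [Field K] [Ring A] [Algebra K A] {q : K}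

theorem eq_iff_eq_of_sub_eq_smul_sub {c : K} (hc : c ≠ 0) {x y u v : A}
    (h : x - y = c • (u - v)) : x = y ↔ u = v := by
  rw [← sub_eq_zero, h, smul_eq_zero_iff_right hc, sub_eq_zero]

theorem smul_sub_one_quad0_iff_idem (hq : q ≠ 0) (e : A) :
    (q • e - 1) * (q • e - 1) = (q - 2) • (q • e - 1) + (q - 1) • (1 : A) ↔ e * e = e := by
  refine eq_iff_eq_of_sub_eq_smul_sub (pow_ne_zero 2 hq) ?_
  simp only [mul_sub, sub_mul, smul_mul_assoc, mul_smul_comm, smul_smul, smul_sub, mul_one,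
    one_mul]
  module

theorem smul_sub_one_rel4_iff_erel7 (hq : q ≠ 0) {e t : A}
    (ht : t * t = (q - 1) • t + q • (1 : A)) :
    (q • e - 1) * t * (q • e - 1) * t =
        (q - 1) • (t * (q • e - 1) * t + t * (q • e - 1)) - (q • e - 1) * t * (q • e - 1) ↔
      e * t * e * t = t * e * t - e * t * e + t * e + e * t + e - t - 1 := by
  refine eq_iff_eq_of_sub_eq_smul_sub (pow_ne_zero 2 hq) ?_
  simp only [mul_sub, sub_mul, mul_add, smul_mul_assoc, mul_smul_comm, smul_smul, smul_add,
    smul_sub, mul_one, one_mul, mul_assoc, ht]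
  module

theorem smul_sub_one_rel5_iff_erel7_rev (hq : q ≠ 0) {e t : A}
    (ht : t * t = (q - 1) • t + q • (1 : A)) :
    t * (q • e - 1) * t * (q • e - 1) =
        (q - 1) • (t * (q • e - 1) * t + (q • e - 1) * t) - (q • e - 1) * t * (q • e - 1) ↔
      t * e * t * e = t * e * t - e * t * e + t * e + e * t + e - t - 1 := by
  refine eq_iff_eq_of_sub_eq_smul_sub (pow_ne_zero 2 hq) ?_
  simp only [mul_sub, sub_mul, add_mul, smul_mul_assoc, mul_smul_comm, smul_smul, smul_add,
    smul_sub, mul_one, one_mul, mul_assoc, ht]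
  module

theorem eq_smul_inv_smul_add_one_sub_one (hq : q ≠ 0) (a : A) : a = q • (q⁻¹ • (a + 1)) - 1 := by
  rw [smul_inv_smul₀ hq, add_sub_cancel_right]

end SubstitutionIdentities

theorem RingQuot.algHom_ext_ι {R X B : Type*} [CommSemiring R] [Semiring B] [Algebra R B]
    {r : FreeAlgebra R X → FreeAlgebra R X → Prop} {φ ψ : RingQuot r →ₐ[R] B}
    (h : ∀ x, φ (RingQuot.mkAlgHom R r (FreeAlgebra.ι R x)) =
      ψ (RingQuot.mkAlgHom R r (FreeAlgebra.ι R x))) : φ = ψ :=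
  RingQuot.ringQuot_ext' R φ ψ (FreeAlgebra.hom_ext (funext h))

section Presentations

variable {K : Type} [Field K] {q : K} {n : ℕ}

@[simp]
theorem MirabolicHecke.mkAlgHom_ι (i : Fin n) :
    RingQuot.mkAlgHom K (SolomonRel K q n) (FreeAlgebra.ι K i) = MirabolicHecke.T i :=
  rfl

@[simp]
theorem MirNew.mkAlgHom_ι (i : Fin n) :
    RingQuot.mkAlgHom K (MirNewRel K q n) (FreeAlgebra.ι K i) = MirNew.gen i :=
  rfl

variable (q) in
def MirabolicHecke.toMirNewGen (i : Fin n) : MirNew K q n :=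
  if i.val = 0 then q • MirNew.gen i - 1 else MirNew.gen i

variable (q) in
def MirNew.toMirabolicHeckeGen (i : Fin n) : MirabolicHecke K q n :=
  if i.val = 0 then q⁻¹ • (MirabolicHecke.T i + 1) else MirabolicHecke.T i

theorem MirabolicHecke.toMirNewGen_respects (hq : q ≠ 0) ⦃x y : FreeAlgebra K (Fin n)⦄
    (h : SolomonRel K q n x y) :
    FreeAlgebra.lift K (toMirNewGen q) x = FreeAlgebra.lift K (toMirNewGen q) y := by
  have rel {x y : FreeAlgebra K (Fin n)} (h : MirNewRel K q n x y) :=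
    RingQuot.mkAlgHom_rel K h
  induction h with
  | quad0 i hi =>
    have he := rel (.idem i hi)
    simp only [map_mul, MirNew.mkAlgHom_ι] at he
    simpa [toMirNewGen, hi] using (smul_sub_one_quad0_iff_idem hq _).2 he
  | quad i hi =>
    simpa [toMirNewGen, show i.val ≠ 0 by omega] using rel (.quad i hi)
  | braid i j hi hij =>
    simpa [toMirNewGen, show i.val ≠ 0 by omega, show j.val ≠ 0 by omega] using
      rel (.braid i j hi hij)
  | rel4 i j hi hj =>
    have ht := rel (.quad j (by omega))
    have he := rel (.erel7 i j hi hj)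
    simp only [map_mul, map_add, map_sub, map_smul, map_one, MirNew.mkAlgHom_ι] at ht he
    simpa [toMirNewGen, hi, show j.val ≠ 0 by omega] using
      (smul_sub_one_rel4_iff_erel7 hq ht).2 he
  | rel5 i j hi hj =>
    have ht := rel (.quad j (by omega))
    have he := (rel (.erel6 i j hi hj)).symm.trans (rel (.erel7 i j hi hj))
    simp only [map_mul, map_add, map_sub, map_smul, map_one, MirNew.mkAlgHom_ι] at ht he
    simpa [toMirNewGen, hi, show j.val ≠ 0 by omega] using
      (smul_sub_one_rel5_iff_erel7_rev hq ht).2 he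
  | comm i j hij =>
    have e_comm {z k : Fin n} (hz : z.val = 0) (hk : 2 ≤ k.val) :
        Commute (toMirNewGen q z) (toMirNewGen q k) := by
      have he : MirNew.gen (q := q) z * MirNew.gen k = MirNew.gen k * MirNew.gen z := by
        simpa using rel (.ecomm z k hz hk)
      simpa [toMirNewGen, hz, show k.val ≠ 0 by omega] using
        (Commute.smul_left he q).sub_left (Commute.one_left _)
    simp only [map_mul, FreeAlgebra.lift_ι_apply]
    by_cases hi : i.val = 0
    · exact e_comm hi (by omega)
    by_cases hj : j.val = 0
    · exact (e_comm hj (by omega)).symm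
    simpa [toMirNewGen, hi, hj] using rel (.comm i j (by omega) (by omega) hij)

theorem MirNew.toMirabolicHeckeGen_respects (hq : q ≠ 0) ⦃x y : FreeAlgebra K (Fin n)⦄
    (h : MirNewRel K q n x y) :
    FreeAlgebra.lift K (toMirabolicHeckeGen q) x =
      FreeAlgebra.lift K (toMirabolicHeckeGen q) y := by
  have rel {x y : FreeAlgebra K (Fin n)} (h : SolomonRel K q n x y) :=
    RingQuot.mkAlgHom_rel K h
  induction h with
  | quad i hi =>
    simpa [toMirabolicHeckeGen, show i.val ≠ 0 by omega] using rel (.quad i hi)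
  | braid i j hi hij =>
    simpa [toMirabolicHeckeGen, show i.val ≠ 0 by omega, show j.val ≠ 0 by omega] using
      rel (.braid i j hi hij)
  | comm i j hi hj hij =>
    simpa [toMirabolicHeckeGen, show i.val ≠ 0 by omega, show j.val ≠ 0 by omega] using
      rel (.comm i j hij)
  | idem x hx =>
    have ha := rel (.quad0 x hx)
    simp only [map_mul, map_add, map_smul, map_one, MirabolicHecke.mkAlgHom_ι] at ha
    rw [eq_smul_inv_smul_add_one_sub_one hq (MirabolicHecke.T x)] at ha
    simpa [toMirabolicHeckeGen, hx] using (smul_sub_one_quad0_iff_idem hq _).1 ha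
  | ecomm x i hx hi =>
    have ha : MirabolicHecke.T (q := q) x * MirabolicHecke.T i =
        MirabolicHecke.T i * MirabolicHecke.T x := by
      simpa using rel (.comm x i (by omega))
    simp only [map_mul, FreeAlgebra.lift_ι_apply, toMirabolicHeckeGen, hx,
      show i.val ≠ 0 by omega, ↓reduceIte]
    exact (Commute.add_left ha (Commute.one_left _)).smul_left q⁻¹
  | erel6 x t hx ht =>
    have htt := rel (.quad t (by omega))
    have h4 := rel (.rel4 x t hx ht)
    have h5 := rel (.rel5 x t hx ht)
    simp only [map_mul, map_add, map_sub, map_smul, map_one, MirabolicHecke.mkAlgHom_ι]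
      at htt h4 h5
    rw [eq_smul_inv_smul_add_one_sub_one hq (MirabolicHecke.T x)] at h4 h5
    simpa [toMirabolicHeckeGen, hx, show t.val ≠ 0 by omega] using
      ((smul_sub_one_rel4_iff_erel7 hq htt).1 h4).trans
        ((smul_sub_one_rel5_iff_erel7_rev hq htt).1 h5).symm
  | erel7 x t hx ht =>
    have htt := rel (.quad t (by omega))
    have h4 := rel (.rel4 x t hx ht)
    simp only [map_mul, map_add, map_sub, map_smul, map_one, MirabolicHecke.mkAlgHom_ι]
      at htt h4
    rw [eq_smul_inv_smul_add_one_sub_one hq (MirabolicHecke.T x)] at h4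
    simpa [toMirabolicHeckeGen, hx, show t.val ≠ 0 by omega] using
      (smul_sub_one_rel4_iff_erel7 hq htt).1 h4

def MirabolicHecke.toMirNew (hq : q ≠ 0) : MirabolicHecke K q n →ₐ[K] MirNew K q n :=
  RingQuot.liftAlgHom K ⟨FreeAlgebra.lift K (toMirNewGen q), toMirNewGen_respects hq⟩

def MirNew.toMirabolicHecke (hq : q ≠ 0) : MirNew K q n →ₐ[K] MirabolicHecke K q n :=
  RingQuot.liftAlgHom K
    ⟨FreeAlgebra.lift K (toMirabolicHeckeGen q), toMirabolicHeckeGen_respects hq⟩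

@[simp]
theorem MirabolicHecke.toMirNew_T (hq : q ≠ 0) (i : Fin n) :
    toMirNew hq (T i) = toMirNewGen q i :=
  (RingQuot.liftAlgHom_mkAlgHom_apply K _ _ _).trans (FreeAlgebra.lift_ι_apply _ _)

@[simp]
theorem MirNew.toMirabolicHecke_gen (hq : q ≠ 0) (i : Fin n) :
    toMirabolicHecke hq (gen i) = toMirabolicHeckeGen q i :=
  (RingQuot.liftAlgHom_mkAlgHom_apply K _ _ _).trans (FreeAlgebra.lift_ι_apply _ _)

def MirabolicHecke.equivMirNew (hq : q ≠ 0) : MirabolicHecke K q n ≃ₐ[K] MirNew K q n :=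
  AlgEquiv.ofAlgHom (toMirNew hq) (MirNew.toMirabolicHecke hq)
    (RingQuot.algHom_ext_ι fun i => by
      by_cases hi : i.val = 0 <;>
        simp [MirNew.toMirabolicHeckeGen, toMirNewGen, hi, hq, -smul_add])
    (RingQuot.algHom_ext_ι fun i => by
      by_cases hi : i.val = 0 <;>
        simp [MirNew.toMirabolicHeckeGen, toMirNewGen, hi, hq, -smul_add])

end Presentations

theorem mirabolicHecke_iso_newPresentation_general (K : Type) [Field K] (q : K) (hq : q ≠ 0)
    (n : ℕ) (hn : 0 < n) :
    ∃ φ : MirabolicHecke K q n ≃ₐ[K] MirNew K q n,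
      φ (MirabolicHecke.T ⟨0, hn⟩) = q • MirNew.gen ⟨0, hn⟩ - 1 ∧
      (∀ i : Fin n, 1 ≤ i.val → φ (MirabolicHecke.T i) = MirNew.gen i) ∧
      φ.symm (MirNew.gen ⟨0, hn⟩) = q⁻¹ • (MirabolicHecke.T ⟨0, hn⟩ + 1) := by
  refine ⟨MirabolicHecke.equivMirNew hq, ?_, fun i hi => ?_, ?_⟩
  all_goals
    simp [MirabolicHecke.equivMirNew, MirabolicHecke.toMirNewGen, MirNew.toMirabolicHeckeGen]
  omega

/-- There is a `K`-algebra isomorphism between the two presentations of the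
mirabolic Hecke algebra, sending `T_0 ↦ q·e − 1` and `T_i ↦ T_i` for `1 ≤ i ≤ n−1`, with
inverse sending `e ↦ q⁻¹(T_0 + 1)`. -/
theorem mirabolicHecke_iso_newPresentation (K : Type) [Field K] (q : K) (hq : q ≠ 0)
    (hq1 : q + 1 ≠ 0) (n : ℕ) (hn : 0 < n) :
    ∃ φ : MirabolicHecke K q n ≃ₐ[K] MirNew K q n,
      φ (MirabolicHecke.T ⟨0, hn⟩) = q • MirNew.gen ⟨0, hn⟩ - 1 ∧
      (∀ i : Fin n, 1 ≤ i.val → φ (MirabolicHecke.T i) = MirNew.gen i) ∧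
      φ.symm (MirNew.gen ⟨0, hn⟩) = q⁻¹ • (MirabolicHecke.T ⟨0, hn⟩ + 1) :=
  mirabolicHecke_iso_newPresentation_general K q hq n hn
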